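/- arXiv:2407.00588 — 2 statements merged into one kernel-verified Lean document; each statement's English description precedes it below -/
import Mathlib

section
/- Let 0 < α < 1 and λ > 0 be real constants. Then for every t > 0, the function s ↦ E_{α,1}(-λ s^α) is differentiable at t and its derivative equals -λ t^{α-1} E_{α,α}(-λ t^α). -/
open Real Set Filter Topology

/-!
Writing `E_{α,1}(c s^α) = ∑ c^m s^{αm} / Γ(αm+1)`, we differentiate termwise on `(t/2, 2t)`:
the derivative series is dominated there because `Γ` grows faster than any exponential.
Since `αm / Γ(αm+1) = 1 / Γ(αm)`, also for `m = 0` thanks to the convention `Γ(0) = 0`,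
the derivative series is `∑ c^m s^{αm-1} / Γ(αm)`, which after a shift of index is
`c s^{α-1} E_{α,α}(c s^α)`.
-/

/-- The real Mittag-Leffler function, with the convention that `1/Γ = 0` at the
poles of `Γ`. -/
noncomputable def mittagLeffler (α β x : ℝ) : ℝ :=
  ∑' m : ℕ, x ^ m / Real.Gamma (α * m + β)

lemma Real.div_Gamma_add_one (x : ℝ) : x / Gamma (x + 1) = (Gamma x)⁻¹ := by
  rcases eq_or_ne x 0 with rfl | hx
  · simp
  · rw [Gamma_add_one hx, div_mul_cancel_left₀ hx]

lemma Real.rpow_le_mul_exp_mul_Gamma_add_one {q x : ℝ} (hq : 1 ≤ q) (hx : 1 ≤ x) :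
    q ^ x ≤ q * exp q * Gamma (x + 1) := by
  set n := ⌊x⌋₊
  have hn : (1 : ℝ) ≤ n := by exact_mod_cast Nat.le_floor (by exact_mod_cast hx)
  have hnx : (n : ℝ) ≤ x := Nat.floor_le (by linarith)
  calc q ^ x ≤ q ^ ((n : ℝ) + 1) := rpow_le_rpow_of_exponent_le hq (Nat.lt_floor_add_one x).le
    _ = q * q ^ n := by rw [rpow_add_one (by positivity), rpow_natCast, mul_comm]
    _ ≤ q * (exp q * n.factorial) := by
        gcongr
        rw [← div_le_iff₀ (by positivity)]
        exact pow_div_factorial_le_exp q (by positivity) n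
    _ = q * exp q * Gamma (n + 1) := by rw [Gamma_nat_eq_factorial]; ring
    _ ≤ q * exp q * Gamma (x + 1) := by
        gcongr
        exact Gamma_strictMonoOn_Ici.monotoneOn (mem_Ici.2 (by linarith))
          (mem_Ici.2 (by linarith)) (by linarith)

lemma summable_pow_div_Gamma {α : ℝ} (hα : 0 < α) (β R : ℝ) :
    Summable fun m : ℕ => R ^ m / Gamma (α * m + β) := by
  -- With `q ^ α = |R| + 1`, the bound `q ^ x ≤ q e^q Γ(x+1)` makes the terms
  -- `O((|R| / (|R| + 1)) ^ m)`.
  set q := (|R| + 1) ^ α⁻¹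
  have hq : 1 ≤ q := one_le_rpow (by linarith [abs_nonneg R]) (by positivity)
  have hqα : q ^ α = |R| + 1 := rpow_inv_rpow (by positivity) hα.ne'
  set r := |R| / (|R| + 1)
  have hr : r < 1 := (div_lt_one (by positivity)).2 (by linarith)
  set K := q * exp q / q ^ (β - 1)
  refine .of_norm_bounded_eventually_nat
    ((summable_geometric_of_lt_one (by positivity) hr).mul_left K) ?_
  have hlarge : ∀ᶠ m : ℕ in atTop, 1 ≤ α * m + β - 1 :=
    (tendsto_atTop_add_const_right _ _ ((tendsto_natCast_atTop_atTop.const_mul_atTop hα).atTop_add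
      tendsto_const_nhds)).eventually_ge_atTop 1
  filter_upwards [hlarge] with m hm
  have hΓ := rpow_le_mul_exp_mul_Gamma_add_one hq hm
  rw [sub_add_cancel] at hΓ
  have hpow : q ^ (α * m + β - 1) = (|R| + 1) ^ m * q ^ (β - 1) := by
    rw [add_sub_assoc, rpow_add (by positivity), rpow_mul_natCast (by positivity), hqα]
  have hΓpos : 0 < Gamma (α * m + β) := Gamma_pos_of_pos (by linarith)
  rw [norm_div, norm_pow, Real.norm_eq_abs, Real.norm_eq_abs, abs_of_pos hΓpos, div_le_iff₀ hΓpos]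
  calc |R| ^ m = r ^ m * q ^ (α * m + β - 1) / q ^ (β - 1) := by
        rw [hpow, div_pow]; field_simp
    _ ≤ r ^ m * (q * exp q * Gamma (α * m + β)) / q ^ (β - 1) := by gcongr
    _ = K * r ^ m * Gamma (α * m + β) := by ring

lemma Real.hasDerivAt_rpow_div_Gamma_add_one (p : ℝ) {s : ℝ} (hs : s ≠ 0) :
    HasDerivAt (fun x => x ^ p / Gamma (p + 1)) (s ^ (p - 1) / Gamma p) s := by
  have h := (hasDerivAt_rpow_const (p := p) (Or.inl hs)).div_const (Gamma (p + 1))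
  rwa [mul_comm, mul_div_assoc, div_Gamma_add_one, ← div_eq_mul_inv] at h

lemma mul_rpow_pow_div_Gamma (α β c : ℝ) {s : ℝ} (hs : 0 ≤ s) (m : ℕ) :
    (c * s ^ α) ^ m / Gamma (α * m + β) = c ^ m * (s ^ (α * m) / Gamma (α * m + β)) := by
  rw [mul_pow, rpow_mul_natCast hs, mul_div_assoc]

lemma hasSum_pow_mul_rpow_div_Gamma {α : ℝ} (hα : 0 < α) (c : ℝ) {t : ℝ} (ht : 0 < t) :
    HasSum (fun m : ℕ => c ^ m * (t ^ (α * m - 1) / Gamma (α * m)))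
      (c * t ^ (α - 1) * mittagLeffler α α (c * t ^ α)) := by
  rw [← hasSum_nat_add_iff' 1]
  simp only [Finset.sum_range_one, Nat.cast_zero, mul_zero, Gamma_zero, div_zero, sub_zero]
  refine ((summable_pow_div_Gamma hα α (c * t ^ α)).hasSum.mul_left _).congr_fun fun m => ?_
  rw [mul_rpow_pow_div_Gamma α α c ht.le, Nat.cast_succ, mul_add_one, add_sub_assoc,
    rpow_add ht, pow_succ]
  ring

lemma norm_pow_mul_rpow_div_Gamma_le {α c t s : ℝ} (hα : 0 ≤ α) (ht : 0 < t)
    (hs : s ∈ Ioo (t / 2) (2 * t)) (m : ℕ) :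
    ‖c ^ m * (s ^ (α * m - 1) / Gamma (α * m))‖
      ≤ 2 / t * ((|c| * (2 * t) ^ α) ^ m / Gamma (α * m)) := by
  have hs0 : 0 < s := by linarith [hs.1]
  have hΓ : 0 ≤ Gamma (α * m) := Gamma_nonneg_of_nonneg (by positivity)
  have hrpow : s ^ (α * m - 1) ≤ (2 * t) ^ (α * m) * (2 / t) := by
    rw [rpow_sub_one hs0.ne', div_eq_mul_inv]
    gcongr
    · exact hs.2.le
    · rw [inv_eq_one_div, div_le_div_iff₀ hs0 ht]; linarith [hs.1]
  rw [norm_mul, norm_pow, Real.norm_eq_abs, Real.norm_of_nonneg (by positivity),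
    mul_pow, ← rpow_mul_natCast (by positivity)]
  calc |c| ^ m * (s ^ (α * m - 1) / Gamma (α * m))
      ≤ |c| ^ m * ((2 * t) ^ (α * m) * (2 / t) / Gamma (α * m)) := by gcongr
    _ = _ := by ring

theorem hasDerivAt_mittagLeffler_mul_rpow {α : ℝ} (hα : 0 < α) (c : ℝ) {t : ℝ} (ht : 0 < t) :
    HasDerivAt (fun s => mittagLeffler α 1 (c * s ^ α))
      (c * t ^ (α - 1) * mittagLeffler α α (c * t ^ α)) t := by
  have htT : t ∈ Ioo (t / 2) (2 * t) := ⟨by linarith, by linarith⟩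
  have hbound : Summable fun m : ℕ => (|c| * (2 * t) ^ α) ^ m / Gamma (α * m) := by
    simpa only [add_zero] using summable_pow_div_Gamma hα 0 (|c| * (2 * t) ^ α)
  have hseries := hasDerivAt_tsum_of_isPreconnected
    (g := fun (m : ℕ) s => c ^ m * (s ^ (α * m) / Gamma (α * m + 1)))
    (g' := fun (m : ℕ) s => c ^ m * (s ^ (α * m - 1) / Gamma (α * m)))
    (hbound.mul_left (2 / t)) isOpen_Ioo
    (convex_Ioo _ _).isPreconnected
    (fun m s hs => ((hasDerivAt_rpow_div_Gamma_add_one (α * m)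
      (by linarith [hs.1] : s ≠ 0)).const_mul (c ^ m)))
    (fun m s hs => norm_pow_mul_rpow_div_Gamma_le hα.le ht hs m) htT
    ((summable_pow_div_Gamma hα 1 (c * t ^ α)).congr (mul_rpow_pow_div_Gamma α 1 c ht.le)) htT
  rw [(hasSum_pow_mul_rpow_div_Gamma hα c ht).tsum_eq] at hseries
  refine hseries.congr_of_eventuallyEq ?_
  filter_upwards [lt_mem_nhds ht] with s hs
  exact tsum_congr (mul_rpow_pow_div_Gamma α 1 c hs.le)

theorem stmt_2_general (α lam : ℝ) (hα0 : 0 < α) :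
    ∀ t : ℝ, 0 < t →
      HasDerivAt (fun s : ℝ => mittagLeffler α 1 (-(lam * s ^ α)))
        (-(lam * t ^ (α - 1) * mittagLeffler α α (-(lam * t ^ α)))) t := by
  intro t ht
  simpa only [neg_mul] using hasDerivAt_mittagLeffler_mul_rpow hα0 (-lam) ht

/-- For `0 < α < 1` and `λ > 0`, for every `t > 0` the map `s ↦ E_{α,1}(-λ s^α)` is
differentiable at `t` with derivative `-λ t^{α-1} E_{α,α}(-λ t^α)`. -/
theorem stmt_2 (α lam : ℝ) (hα0 : 0 < α) (hα1 : α < 1) (hlam : 0 < lam) :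
    ∀ t : ℝ, 0 < t →
      HasDerivAt (fun s : ℝ => mittagLeffler α 1 (-(lam * s ^ α)))
        (-(lam * t ^ (α - 1) * mittagLeffler α α (-(lam * t ^ α)))) t :=
  stmt_2_general α lam hα0
end

section
/- Let 0 < α < 1 be a real constant. Then E_{α,1}(-η) > 0 for every η ≥ 0. -/
/-!
Put `u t = E_{α,1}(-t ^ α)`. Integrating the series termwise with the Beta integral shows that
`u` solves the fractional relaxation equation `u + I^α u = 1`, where `I^α` is the
Riemann–Liouville integral. If `u` had a first nonpositive point `t₀`, let `τ` maximize `u` on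
`[t₀ - δ, t₀]`. The kernel `(t - s) ^ (α - 1)` decreases in `t`, so comparing the equation at `τ`
and at `t₀` gives `u τ ≤ u τ * δ ^ α / Γ(α + 1)`, which is absurd for small `δ`. Convergence and
continuity of the series come from `Γ(x + α) / Γ(x) → ∞`, a consequence of the log-convexity
of `Γ`.
-/

open Real MeasureTheory Set Filter Topology

namespace Real

theorem Gamma_add_one_le_Gamma_add_mul_rpow {a x : ℝ} (ha0 : 0 < a) (ha1 : a < 1)
    (hx : 0 < x + a) : Gamma (x + 1) ≤ Gamma (x + a) * (x + a) ^ (1 - a) := by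
  have hΓ : 0 < Gamma (x + a) := Gamma_pos_of_pos hx
  have h := Gamma_mul_add_mul_le_rpow_Gamma_mul_rpow_Gamma hx (by linarith : 0 < x + a + 1)
    ha0 (sub_pos.2 ha1) (add_sub_cancel a 1)
  rwa [show a * (x + a) + (1 - a) * (x + a + 1) = x + 1 by ring, Gamma_add_one hx.ne',
    mul_rpow hx.le hΓ.le, mul_left_comm, ← rpow_add hΓ, add_sub_cancel, rpow_one, mul_comm] at h

theorem Gamma_mul_rpow_le_two_mul_Gamma_add {a x : ℝ} (ha0 : 0 < a) (ha1 : a < 1)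
    (hx : 1 ≤ x) : Gamma x * x ^ a ≤ 2 * Gamma (x + a) := by
  have hx0 : 0 < x := by linarith
  have hpow : 0 < x ^ (1 - a) := rpow_pos_of_pos hx0 _
  have hshift : (x + a) ^ (1 - a) ≤ 2 * x ^ (1 - a) :=
    calc (x + a) ^ (1 - a) ≤ (2 * x) ^ (1 - a) := by gcongr; linarith
      _ = 2 ^ (1 - a) * x ^ (1 - a) := mul_rpow zero_le_two hx0.le
      _ ≤ 2 ^ (1 : ℝ) * x ^ (1 - a) := by gcongr <;> linarith
      _ = 2 * x ^ (1 - a) := by rw [rpow_one]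
  have hinterp := Gamma_add_one_le_Gamma_add_mul_rpow ha0 ha1 (by linarith : 0 < x + a)
  rw [Gamma_add_one hx0.ne'] at hinterp
  refine le_of_mul_le_mul_right ?_ hpow
  calc Gamma x * x ^ a * x ^ (1 - a) = x * Gamma x := by
        rw [mul_assoc, ← rpow_add hx0, add_sub_cancel, rpow_one, mul_comm]
    _ ≤ Gamma (x + a) * (2 * x ^ (1 - a)) := hinterp.trans (by gcongr)
    _ = 2 * Gamma (x + a) * x ^ (1 - a) := by ring

theorem tendsto_Gamma_add_div_Gamma_atTop {a : ℝ} (ha0 : 0 < a) (ha1 : a < 1) :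
    Tendsto (fun x => Gamma (x + a) / Gamma x) atTop atTop := by
  refine tendsto_atTop_mono' _ ?_ ((tendsto_rpow_atTop ha0).atTop_div_const two_pos)
  filter_upwards [eventually_ge_atTop 1] with x hx
  rw [div_le_div_iff₀ two_pos (Gamma_pos_of_pos (by linarith))]
  linarith [Gamma_mul_rpow_le_two_mul_Gamma_add ha0 ha1 hx]

end Real

theorem summable_pow_div_Gamma_mul_add {α : ℝ} (hα0 : 0 < α) (hα1 : α < 1) (β x : ℝ) :
    Summable fun m : ℕ => x ^ m / Gamma (α * m + β) := by
  have harg : Tendsto (fun m : ℕ => α * m + β) atTop atTop :=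
    tendsto_atTop_add_const_right _ _ (tendsto_natCast_atTop_atTop.const_mul_atTop hα0)
  refine summable_of_ratio_norm_eventually_le (r := 1 / 2) (by norm_num) ?_
  have hgrowth := (tendsto_Gamma_add_div_Gamma_atTop hα0 hα1).eventually_ge_atTop (2 * |x|)
  filter_upwards [harg.eventually_gt_atTop 0, harg.eventually hgrowth] with m hpos hratio
  set y := α * m + β
  have hΓ : 0 < Gamma y := Gamma_pos_of_pos hpos
  have hΓ' : 0 < Gamma (y + α) := Gamma_pos_of_pos (by linarith)
  rw [le_div_iff₀ hΓ] at hratio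
  rw [show α * ((m + 1 : ℕ) : ℝ) + β = y + α by push_cast; ring]
  simp only [norm_div, norm_mul, norm_pow, Real.norm_eq_abs, abs_of_pos hΓ, abs_of_pos hΓ',
    pow_succ]
  rw [div_le_iff₀ hΓ']
  calc |x| ^ m * |x| = 1 / 2 * (|x| ^ m / Gamma y) * (2 * |x| * Gamma y) := by field_simp
    _ ≤ _ := by gcongr

theorem mittagLeffler_zero (α β : ℝ) : mittagLeffler α β 0 = (Gamma β)⁻¹ := by
  rw [mittagLeffler, tsum_eq_single 0 fun m hm => by simp [hm]]
  simp

theorem continuous_mittagLeffler {α : ℝ} (hα0 : 0 < α) (hα1 : α < 1) (β : ℝ) :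
    Continuous (mittagLeffler α β) := by
  refine continuous_iff_continuousAt.2 fun x => ?_
  set A := ‖x‖ + 1
  refine ContinuousOn.continuousAt (s := Metric.closedBall 0 A) ?_
    (Metric.closedBall_mem_nhds_of_mem (by simp [A]))
  refine continuousOn_tsum (fun m => (continuous_pow m).div_const _ |>.continuousOn)
    (summable_pow_div_Gamma_mul_add hα0 hα1 β A).abs fun m y hy => ?_
  rw [mem_closedBall_zero_iff] at hy
  rw [norm_div, norm_pow, abs_div, abs_pow, abs_of_nonneg (by positivity : (0 : ℝ) ≤ A),
    ← Real.norm_eq_abs]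
  gcongr

noncomputable def riemannLiouville (α : ℝ) (f : ℝ → ℝ) (t : ℝ) : ℝ :=
  (Gamma α)⁻¹ * ∫ s in (0 : ℝ)..t, (t - s) ^ (α - 1) * f s

theorem Gamma_mul_riemannLiouville {α : ℝ} (hα : 0 < α) (f : ℝ → ℝ) (t : ℝ) :
    Gamma α * riemannLiouville α f t = ∫ s in (0 : ℝ)..t, (t - s) ^ (α - 1) * f s :=
  mul_inv_cancel_left₀ (Gamma_pos_of_pos hα).ne' _

theorem integral_sub_rpow_mul_rpow {p q t : ℝ} (hp : 0 < p) (hq : 0 < q) (ht : 0 < t) :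
    ∫ s in (0 : ℝ)..t, (t - s) ^ (p - 1) * s ^ (q - 1) =
      Gamma p * Gamma q / Gamma (p + q) * t ^ (p + q - 1) := by
  have hΓ : (Gamma (q + p) : ℂ) ≠ 0 := by
    exact_mod_cast (Gamma_pos_of_pos (by linarith : 0 < q + p)).ne'
  have hB : Complex.betaIntegral q p = Gamma q * Gamma p / Gamma (q + p) := by
    have h := Complex.Gamma_mul_Gamma_eq_betaIntegral (s := q) (t := p) (by simpa) (by simpa)
    rw [← Complex.ofReal_add, Complex.Gamma_ofReal, Complex.Gamma_ofReal,
      Complex.Gamma_ofReal] at h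
    rw [eq_div_iff hΓ, h, mul_comm]
  apply Complex.ofReal_injective
  rw [← intervalIntegral.integral_ofReal]
  calc ∫ s in (0 : ℝ)..t, (((t - s) ^ (p - 1) * s ^ (q - 1) : ℝ) : ℂ)
      = ∫ s in (0 : ℝ)..t, (s : ℂ) ^ ((q : ℂ) - 1) * ((t : ℂ) - s) ^ ((p : ℂ) - 1) := by
        refine intervalIntegral.integral_congr fun s hs => ?_
        rw [uIcc_of_le ht.le] at hs
        rw [Complex.ofReal_mul, Complex.ofReal_cpow (by linarith [hs.2]),
          Complex.ofReal_cpow hs.1, mul_comm]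
        push_cast
        rfl
    _ = _ := by
        rw [Complex.betaIntegral_scaled _ _ ht, hB,
          show (q : ℂ) + p - 1 = ((p + q - 1 : ℝ) : ℂ) by push_cast; ring,
          ← Complex.ofReal_cpow ht.le, add_comm q p]
        push_cast
        ring

theorem riemannLiouville_rpow {α q t : ℝ} (hα : 0 < α) (hq : -1 < q) (ht : 0 < t) :
    riemannLiouville α (fun s => s ^ q) t = Gamma (q + 1) / Gamma (q + α + 1) * t ^ (q + α) := by
  have hΓ : Gamma α ≠ 0 := (Gamma_pos_of_pos hα).ne'
  have h := integral_sub_rpow_mul_rpow hα (by linarith : 0 < q + 1) ht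
  rw [add_sub_cancel_right, show α + (q + 1) = q + α + 1 by ring,
    show q + α + 1 - 1 = q + α by ring] at h
  rw [riemannLiouville, h]
  field_simp

noncomputable def relaxation (α t : ℝ) : ℝ :=
  mittagLeffler α 1 (-t ^ α)

section Relaxation

variable {α : ℝ}

theorem relaxation_zero (hα : α ≠ 0) : relaxation α 0 = 1 := by
  simp [relaxation, zero_rpow hα, mittagLeffler_zero]

theorem continuous_relaxation (hα0 : 0 < α) (hα1 : α < 1) : Continuous (relaxation α) :=
  (continuous_mittagLeffler hα0 hα1 1).comp (continuous_rpow_const hα0.le).neg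

theorem relaxation_eq_tsum {s : ℝ} (hs : 0 ≤ s) :
    relaxation α s = ∑' m : ℕ, (-1) ^ m * s ^ (α * m) / Gamma (α * m + 1) := by
  refine tsum_congr fun m => ?_
  rw [neg_pow, rpow_mul_natCast hs]

theorem relaxation_eq_one_sub_tsum (hα0 : 0 < α) (hα1 : α < 1) (t : ℝ) :
    relaxation α t =
      1 - ∑' m : ℕ, (-1) ^ m * ((t ^ α) ^ (m + 1) / Gamma (α * (m + 1 : ℕ) + 1)) := by
  have hsign : ∀ m : ℕ, (-t ^ α) ^ (m + 1) / Gamma (α * (m + 1 : ℕ) + 1) =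
      -((-1) ^ m * ((t ^ α) ^ (m + 1) / Gamma (α * (m + 1 : ℕ) + 1))) := fun m => by
    rw [neg_pow (t ^ α), pow_succ]
    ring
  rw [relaxation, mittagLeffler, (summable_pow_div_Gamma_mul_add hα0 hα1 1 _).tsum_eq_zero_add,
    tsum_congr hsign, tsum_neg]
  simp [sub_eq_add_neg]

theorem intervalIntegrable_sub_rpow_mul (hα : 0 < α) {f : ℝ → ℝ} (hf : Continuous f)
    (w a b : ℝ) : IntervalIntegrable (fun s => (w - s) ^ (α - 1) * f s) volume a b := by
  have hker := (intervalIntegral.intervalIntegrable_rpow' (by linarith : -1 < α - 1)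
    (a := w - a) (b := w - b)).comp_sub_left w
  simp only [sub_sub_cancel] at hker
  exact hker.mul_continuousOn hf.continuousOn

theorem integral_sub_rpow_mul_rpow_div_Gamma (hα : 0 < α) {t : ℝ} (ht : 0 < t) (m : ℕ) :
    ∫ s in (0 : ℝ)..t, (t - s) ^ (α - 1) * s ^ (α * m) / Gamma (α * m + 1) =
      Gamma α * ((t ^ α) ^ (m + 1) / Gamma (α * (m + 1 : ℕ) + 1)) := by
  have hm : 0 ≤ α * m := by positivity
  have hΓ := (Gamma_pos_of_pos (by linarith : 0 < α * m + 1)).ne'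
  rw [intervalIntegral.integral_div, ← Gamma_mul_riemannLiouville hα,
    riemannLiouville_rpow hα (by linarith) ht, ← rpow_natCast, ← rpow_mul ht.le]
  push_cast
  rw [show α * m + α + 1 = α * (m + 1) + 1 by ring, show α * m + α = α * (m + 1) by ring]
  field_simp

theorem riemannLiouville_relaxation (hα0 : 0 < α) (hα1 : α < 1) {t : ℝ} (ht : 0 ≤ t) :
    riemannLiouville α (relaxation α) t = 1 - relaxation α t := by
  rcases ht.eq_or_lt with rfl | ht
  · simp [riemannLiouville, relaxation_zero hα0.ne']
  set g : ℕ → ℝ → ℝ := fun m s => (t - s) ^ (α - 1) * s ^ (α * m) / Gamma (α * m + 1)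
  have hg_integral (m : ℕ) : ∫ s in Ioc 0 t, g m s =
      Gamma α * ((t ^ α) ^ (m + 1) / Gamma (α * (m + 1 : ℕ) + 1)) := by
    rw [← intervalIntegral.integral_of_le ht.le, integral_sub_rpow_mul_rpow_div_Gamma hα0 ht]
  have hg_integrable (m : ℕ) : IntegrableOn (g m) (Ioc 0 t) :=
    (intervalIntegrable_iff_integrableOn_Ioc_of_le ht.le).1 <| (intervalIntegrable_sub_rpow_mul
      hα0 (continuous_rpow_const (by positivity)) t 0 t).div_const _
  have hnorm (m : ℕ) : ∫ s in Ioc 0 t, ‖(-1) ^ m * g m s‖ = ∫ s in Ioc 0 t, g m s :=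
    setIntegral_congr_fun measurableSet_Ioc fun s hs => by
      have := Gamma_pos_of_pos (by positivity : 0 < α * m + 1)
      have := rpow_nonneg (sub_nonneg.2 hs.2) (α - 1)
      have := rpow_nonneg hs.1.le (α * m)
      simp only [norm_mul, norm_pow, norm_neg, norm_one, one_pow, one_mul, g]
      exact Real.norm_of_nonneg (by positivity)
  have hsummable : Summable fun m : ℕ => ∫ s in Ioc 0 t, ‖(-1) ^ m * g m s‖ := by
    simp_rw [hnorm, hg_integral]
    exact ((summable_nat_add_iff 1).2 (summable_pow_div_Gamma_mul_add hα0 hα1 1 _)).mul_left _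
  calc riemannLiouville α (relaxation α) t
      = (Gamma α)⁻¹ * ∫ s in Ioc 0 t, ∑' m : ℕ, (-1) ^ m * g m s := by
        rw [riemannLiouville, intervalIntegral.integral_of_le ht.le]
        refine congrArg _ (setIntegral_congr_fun measurableSet_Ioc fun s hs => ?_)
        simp only [relaxation_eq_tsum hs.1.le, g, ← tsum_mul_left]
        congr 1 with m
        ring
    _ = (Gamma α)⁻¹ * ∑' m : ℕ, (-1) ^ m * ∫ s in Ioc 0 t, g m s := by
        rw [← integral_tsum_of_summable_integral_norm (fun m => (hg_integrable m).const_mul _)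
          hsummable]
        simp_rw [integral_const_mul]
    _ = 1 - relaxation α t := by
        simp_rw [hg_integral, mul_left_comm _ (Gamma α), tsum_mul_left,
          inv_mul_cancel_left₀ (Gamma_pos_of_pos hα0).ne', relaxation_eq_one_sub_tsum hα0 hα1]
        ring

end Relaxation

section Positivity

variable {α : ℝ} {u : ℝ → ℝ}

theorem integral_sub_rpow (hα : 0 < α) {a b : ℝ} :
    ∫ s in a..b, (b - s) ^ (α - 1) = (b - a) ^ α / α := by
  rw [intervalIntegral.integral_comp_sub_left (fun v => v ^ (α - 1)) b, sub_self,
    integral_rpow (Or.inl (by linarith)), sub_add_cancel, zero_rpow hα.ne', sub_zero]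

theorem integral_sub_rpow_mul_le_integral_sub_rpow_mul (hα0 : 0 < α) (hα1 : α ≤ 1)
    (hu : Continuous u) {τ t₀ : ℝ} (hτ : 0 ≤ τ) (hτt₀ : τ ≤ t₀)
    (hpos : ∀ s ∈ Ioo 0 τ, 0 ≤ u s) :
    ∫ s in (0 : ℝ)..τ, (t₀ - s) ^ (α - 1) * u s ≤
      ∫ s in (0 : ℝ)..τ, (τ - s) ^ (α - 1) * u s :=
  intervalIntegral.integral_mono_on_of_le_Ioo hτ (intervalIntegrable_sub_rpow_mul hα0 hu _ _ _)
    (intervalIntegrable_sub_rpow_mul hα0 hu _ _ _) fun s hs =>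
      mul_le_mul_of_nonneg_right
        (rpow_le_rpow_of_nonpos (sub_pos.2 hs.2) (by linarith) (by linarith)) (hpos s hs)

theorem integral_sub_rpow_mul_le (hα : 0 < α) (hu : Continuous u) {τ t₀ M : ℝ}
    (hτt₀ : τ ≤ t₀) (hM : ∀ s ∈ Icc τ t₀, u s ≤ M) :
    ∫ s in τ..t₀, (t₀ - s) ^ (α - 1) * u s ≤ M * (t₀ - τ) ^ α / α := by
  calc ∫ s in τ..t₀, (t₀ - s) ^ (α - 1) * u s
      ≤ ∫ s in τ..t₀, (t₀ - s) ^ (α - 1) * M :=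
        intervalIntegral.integral_mono_on hτt₀ (intervalIntegrable_sub_rpow_mul hα hu _ _ _)
          (intervalIntegrable_sub_rpow_mul hα continuous_const _ _ _) fun s hs =>
            mul_le_mul_of_nonneg_left (hM s hs) (rpow_nonneg (by linarith [hs.2]) _)
    _ = M * (t₀ - τ) ^ α / α := by
        rw [intervalIntegral.integral_mul_const, integral_sub_rpow hα]
        ring

theorem le_of_riemannLiouville_eq_one_sub (hα0 : 0 < α) (hα1 : α ≤ 1) (hu : Continuous u)
    (hV : ∀ t, 0 ≤ t → riemannLiouville α u t = 1 - u t) {τ t₀ M : ℝ} (hτ : 0 ≤ τ)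
    (hτt₀ : τ ≤ t₀) (hut₀ : u t₀ ≤ 0) (hpos : ∀ s ∈ Ioo 0 τ, 0 ≤ u s)
    (hM : ∀ s ∈ Icc τ t₀, u s ≤ M) :
    u τ ≤ M * (t₀ - τ) ^ α / Gamma (α + 1) := by
  have hΓ := Gamma_pos_of_pos hα0
  have hVt₀ := Gamma_mul_riemannLiouville hα0 u t₀
  rw [hV t₀ (hτ.trans hτt₀), ← intervalIntegral.integral_add_adjacent_intervals
    (intervalIntegrable_sub_rpow_mul hα0 hu _ _ τ)
    (intervalIntegrable_sub_rpow_mul hα0 hu _ _ _)] at hVt₀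
  have hVτ := Gamma_mul_riemannLiouville hα0 u τ
  rw [hV τ hτ] at hVτ
  have hhead := integral_sub_rpow_mul_le_integral_sub_rpow_mul hα0 hα1 hu hτ hτt₀ hpos
  have htail := integral_sub_rpow_mul_le hα0 hu hτt₀ hM
  have hmain : Gamma α * u τ ≤ M * (t₀ - τ) ^ α / α := by
    nlinarith [mul_nonpos_of_nonneg_of_nonpos hΓ.le hut₀]
  rw [Gamma_add_one hα0.ne', le_div_iff₀ (by positivity)]
  rw [le_div_iff₀ hα0] at hmain
  linarith

theorem exists_first_nonpos (hu : Continuous u) (h0 : 0 < u 0) {T : ℝ} (hT : 0 ≤ T)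
    (huT : u T ≤ 0) : ∃ t₀, 0 < t₀ ∧ u t₀ ≤ 0 ∧ ∀ s ∈ Ico 0 t₀, 0 < u s := by
  obtain ⟨t₀, ⟨⟨ht₀, ht₀T⟩, hut₀⟩, hleast⟩ :=
    (isCompact_Icc.inter_right (isClosed_le hu continuous_const)).exists_isLeast
      ⟨T, ⟨hT, le_rfl⟩, huT⟩
  refine ⟨t₀, ht₀.lt_of_ne ?_, hut₀, fun s hs => ?_⟩
  · rintro rfl
    exact hut₀.not_gt h0
  · by_contra! hus
    exact hs.2.not_ge (hleast ⟨⟨hs.1, hs.2.le.trans ht₀T⟩, hus⟩)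

theorem pos_of_riemannLiouville_eq_one_sub (hα0 : 0 < α) (hα1 : α ≤ 1) (hu : Continuous u)
    (hV : ∀ t, 0 ≤ t → riemannLiouville α u t = 1 - u t) {t : ℝ} (ht : 0 ≤ t) :
    0 < u t := by
  by_contra! hut
  have hu0 : u 0 = 1 := by
    have h := hV 0 le_rfl
    rw [riemannLiouville, intervalIntegral.integral_same, mul_zero] at h
    linarith
  obtain ⟨t₀, ht₀, hut₀, hpos⟩ := exists_first_nonpos hu (hu0 ▸ one_pos) ht hut
  have hΓ : 0 < Gamma (α + 1) := Gamma_pos_of_pos (by linarith)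
  have hsmall : Tendsto (fun δ : ℝ => δ ^ α) (𝓝[>] 0) (𝓝 0) := by
    simpa [zero_rpow hα0.ne'] using
      ((continuous_rpow_const hα0.le).tendsto 0).mono_left nhdsWithin_le_nhds
  obtain ⟨δ, hδα, hδ⟩ :=
    ((hsmall.eventually (gt_mem_nhds hΓ)).and (Ioo_mem_nhdsGT ht₀)).exists
  obtain ⟨τ, hτ, hmax⟩ := (isCompact_Icc (a := t₀ - δ) (b := t₀)).exists_isMaxOn
    (nonempty_Icc.2 (by linarith [hδ.1])) hu.continuousOn
  have hM : 0 < u τ := (hpos _ ⟨by linarith [hδ.2], by linarith [hδ.1]⟩).trans_le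
    (hmax ⟨le_rfl, by linarith [hδ.1]⟩)
  have key := le_of_riemannLiouville_eq_one_sub hα0 hα1 hu hV (by linarith [hτ.1, hδ.2]) hτ.2
    hut₀ (fun s hs => (hpos s ⟨hs.1.le, hs.2.trans_le hτ.2⟩).le)
    fun s hs => hmax ⟨by linarith [hτ.1, hs.1], hs.2⟩
  have hτδ : (t₀ - τ) ^ α ≤ δ ^ α :=
    rpow_le_rpow (sub_nonneg.2 hτ.2) (by linarith [hτ.1]) hα0.le
  rw [le_div_iff₀ hΓ] at key
  nlinarith

end Positivity

/-- For `0 < α < 1`, `E_{α,1}(-η) > 0` for all `η ≥ 0`. -/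
theorem stmt_3 (α : ℝ) (hα0 : 0 < α) (hα1 : α < 1) :
    ∀ η : ℝ, 0 ≤ η → 0 < mittagLeffler α 1 (-η) := by
  intro η hη
  have h := pos_of_riemannLiouville_eq_one_sub hα0 hα1.le (continuous_relaxation hα0 hα1)
    (fun t ht => riemannLiouville_relaxation hα0 hα1 ht) (rpow_nonneg hη α⁻¹)
  rwa [relaxation, rpow_inv_rpow hη hα0.ne'] at h
end
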